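/- Work in ℝ², fix j ∈ {1,2}, p ∈ (1,∞), and nonzero reals c_1, c_2, and for parameters (ρ_1, ρ_2, a_1, a_2, d_1, d_2) with ρ_1 c_1 ≠ 0 and ρ_2 c_2 ≠ 0 let A = (A_1, A_2) with A_k = [[a_k, ρ_k c_k],[c_k, d_k]], and let T_A (respectively T) denote the unique continuous linear operator on L^p(ℝ², ℂ) that agrees with R_j^A (respectively with the classical Riesz transform R_j) on Schwartz functions. Then for every f ∈ L^p(ℝ², ℂ), as (ρ_1, ρ_2, a_1, a_2, d_1, d_2) → (−1, −1, 0, 0, 0, 0), the norm ‖T_A f − T f‖_{L^p(ℝ²)} converges to 0. -/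

import Mathlib

open MeasureTheory Filter Topology
open scoped Real ENNReal RealInnerProductSpace

noncomputable section

/-- The constant `c̃ₙ = Γ((n+1)/2) / π^((n+1)/2)`. -/
def rieszConst (n : ℕ) : ℝ :=
  Real.Gamma (((n : ℝ) + 1) / 2) / Real.pi ^ (((n : ℝ) + 1) / 2)

/-- The chirp function `exp(i Σₖ wₖ yₖ²)`. -/
def chirp {n : ℕ} (w : Fin n → ℝ) (y : EuclideanSpace ℝ (Fin n)) : ℂ :=
  Complex.exp (Complex.I * ((∑ k, w k * y k ^ 2 : ℝ) : ℂ))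

/-- The truncated Riesz-type singular integral
`∫_{‖x-y‖ ≥ ε} (xⱼ - yⱼ) ‖x - y‖^{-(n+1)} g y dy`. -/
def truncRiesz {n : ℕ} (j : Fin n) (g : EuclideanSpace ℝ (Fin n) → ℂ)
    (x : EuclideanSpace ℝ (Fin n)) (ε : ℝ) : ℂ :=
  ∫ y in {y : EuclideanSpace ℝ (Fin n) | ε ≤ ‖x - y‖},
    ((x j - y j : ℝ) : ℂ) / ((‖x - y‖ : ℝ) : ℂ) ^ (n + 1) * g y

/-- The principal value `lim_{ε → 0⁺}` of the truncated Riesz-type singular integral. -/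
def pvRiesz {n : ℕ} (j : Fin n) (g : EuclideanSpace ℝ (Fin n) → ℂ)
    (x : EuclideanSpace ℝ (Fin n)) : ℂ :=
  limUnder (𝓝[>] (0 : ℝ)) (truncRiesz j g x)

/-- The `j`-th linear canonical Riesz transform with parameters `a b d`
(entries of the matrices `Aₖ = [[aₖ, bₖ], [cₖ, dₖ]]`). -/
def lcRiesz {n : ℕ} (a b d : Fin n → ℝ) (j : Fin n)
    (f : EuclideanSpace ℝ (Fin n) → ℂ) (x : EuclideanSpace ℝ (Fin n)) : ℂ :=
  (rieszConst n : ℂ) * chirp (fun k => -(d k) / (2 * b k)) x *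
    pvRiesz j (fun y => f y * chirp (fun k => a k / (2 * b k)) y) x

/-- The classical `j`-th Riesz transform (principal value). -/
def rieszTrans {n : ℕ} (j : Fin n) (f : EuclideanSpace ℝ (Fin n) → ℂ)
    (x : EuclideanSpace ℝ (Fin n)) : ℂ :=
  (rieszConst n : ℂ) * pvRiesz j f x

/-- The kernel of the linear canonical transform with parameters `a b d`. -/
def lctKernel {n : ℕ} (a b d : Fin n → ℝ)
    (x u : EuclideanSpace ℝ (Fin n)) : ℂ :=
  ∏ k, ((2 * (Real.pi : ℂ) * Complex.I * (b k : ℂ))⁻¹ ^ ((1 : ℂ) / 2) *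
    (Complex.exp (Complex.I * ((a k * x k ^ 2 / (2 * b k) : ℝ) : ℂ)) *
      (Complex.exp (-(Complex.I * ((x k * u k / b k : ℝ) : ℂ))) *
        Complex.exp (Complex.I * ((d k * u k ^ 2 / (2 * b k) : ℝ) : ℂ)))))

/-- The linear canonical transform with parameters `a b d`. -/
def lct {n : ℕ} (a b d : Fin n → ℝ) (f : EuclideanSpace ℝ (Fin n) → ℂ)
    (u : EuclideanSpace ℝ (Fin n)) : ℂ :=
  ∫ x, f x * lctKernel a b d x u

end

/-- The parameter space `(ρ₁, ρ₂, a₁, a₂, d₁, d₂)` for the family of matrices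
`Aₖ = [[aₖ, ρₖ cₖ],[cₖ, dₖ]]`: a triple `(ρ, a, d)`. -/
abbrev LCParam : Type := (Fin 2 → ℝ) × (Fin 2 → ℝ) × (Fin 2 → ℝ)

/-- The limiting parameter point `(ρ, a, d) = (-1, -1, 0, 0, 0, 0)`. -/
def lcParamLimit : LCParam := (fun _ => -1, fun _ => 0, fun _ => 0)

/-- The set of admissible parameters, those with `bₖ = ρₖ cₖ ≠ 0` for `k = 1, 2`. -/
def lcParamValid (c : Fin 2 → ℝ) : Set LCParam := {q | ∀ k, q.1 k * c k ≠ 0}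

/-! On Schwartz functions `R_j^A f = e_d · R_j (e_a · f)` with the unimodular chirps
`e_a(y) = exp(i Σₖ aₖ yₖ² / 2bₖ)` and `e_d(x) = exp(-i Σₖ dₖ xₖ² / 2bₖ)`. Multiplication by a chirp
is an isometry of `Lᵖ` preserving Schwartz space, so by density `T_A = M_{e_d} ∘ T ∘ M_{e_a}` and
`‖T_A g - T g‖ ≤ ‖T‖ ‖e_a g - g‖ₚ + ‖e_d T g - T g‖ₚ`. As `(ρ, a, d) → (-1, 0, 0)` the chirp
weights `aₖ / 2ρₖcₖ` and `dₖ / 2ρₖcₖ` tend to `0`, so `e_a, e_d → 1` pointwise and both terms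
vanish in the limit by dominated convergence. -/

section DominatedLp

variable {α E : Type*} [MeasurableSpace α] {μ : Measure α} [NormedAddCommGroup E] {p : ℝ≥0∞}

theorem tendsto_eLpNorm_sub_of_dominated {ι : Type*} {l : Filter ι} [l.IsCountablyGenerated]
    {F : ι → α → E} {f : α → E} {G : α → ℝ} (hp : p ≠ ⊤)
    (hF : ∀ i, AEStronglyMeasurable (F i) μ) (hf : AEStronglyMeasurable f μ)
    (hG : MemLp G p μ) (h_bound : ∀ i, ∀ᵐ x ∂μ, ‖F i x - f x‖ ≤ G x)
    (h_lim : ∀ᵐ x ∂μ, Tendsto (fun i => F i x) l (𝓝 (f x))) :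
    Tendsto (fun i => eLpNorm (F i - f) p μ) l (𝓝 0) := by
  rcases eq_or_ne p 0 with rfl | hp0
  · simpa using tendsto_const_nhds
  have hr : 0 < p.toReal := ENNReal.toReal_pos hp0 hp
  have h_rpow {a : ℝ} (ha : 0 < a) : Tendsto (fun t : ℝ≥0∞ => t ^ a) (𝓝 0) (𝓝 0) := by
    simpa [ENNReal.zero_rpow_of_pos ha] using
      (ENNReal.continuous_rpow_const (y := a)).tendsto 0
  have h_int : Tendsto (fun i => ∫⁻ x, ‖(F i - f) x‖ₑ ^ p.toReal ∂μ) l (𝓝 0) := by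
    have := tendsto_lintegral_filter_of_dominated_convergence' (μ := μ) (l := l)
      (F := fun i x => ‖(F i - f) x‖ₑ ^ p.toReal) (f := fun _ => 0)
      (fun x => ‖G x‖ₑ ^ p.toReal)
      (.of_forall fun i => ((hF i).sub hf).enorm.pow_const _)
      (.of_forall fun i => (h_bound i).mono fun x hx => by
        gcongr
        exact enorm_le_iff_norm_le.mpr (hx.trans (Real.le_norm_self _)))
      (lintegral_rpow_enorm_lt_top_of_eLpNorm_lt_top hp0 hp hG.eLpNorm_lt_top).ne
      (h_lim.mono fun x hx => (h_rpow hr).comp (by simpa using (hx.sub_const (f x)).enorm))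
    simpa using this
  simpa only [eLpNorm_eq_lintegral_rpow_enorm_toReal hp0 hp, Function.comp_def] using
    (h_rpow (one_div_pos.mpr hr)).comp h_int

end DominatedLp

theorem norm_comp_comp_apply_sub_le {𝕜 E F : Type*} [NontriviallyNormedField 𝕜]
    [NormedAddCommGroup E] [NormedSpace 𝕜 E] [NormedAddCommGroup F] [NormedSpace 𝕜 F]
    (M₁ : E →L[𝕜] E) (T : E →L[𝕜] F) (M₂ : F →L[𝕜] F) (hM₂ : ∀ v, ‖M₂ v‖ ≤ ‖v‖) (g : E) :
    ‖M₂ (T (M₁ g)) - T g‖ ≤ ‖T‖ * ‖M₁ g - g‖ + ‖M₂ (T g) - T g‖ :=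
  calc ‖M₂ (T (M₁ g)) - T g‖ = ‖M₂ (T (M₁ g - g)) + (M₂ (T g) - T g)‖ := by
        simp only [map_sub]; abel_nf
    _ ≤ ‖T (M₁ g - g)‖ + ‖M₂ (T g) - T g‖ := (norm_add_le _ _).trans (by gcongr; exact hM₂ _)
    _ ≤ ‖T‖ * ‖M₁ g - g‖ + ‖M₂ (T g) - T g‖ := by gcongr; exact T.le_opNorm _

section Chirp

open Complex

theorem iteratedDeriv_cexp_I_mul (m : ℕ) :
    iteratedDeriv m (fun t : ℝ => cexp (I * t)) = fun t : ℝ => I ^ m * cexp (I * t) := by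
  induction m with
  | zero => simp
  | succ m ih =>
    rw [iteratedDeriv_succ, ih]
    funext t
    have h := ((hasDerivAt_id (t : ℂ)).const_mul I).cexp.comp_ofReal
    simp only [id, mul_one] at h
    rw [deriv_const_mul _ h.differentiableAt, h.deriv]
    ring

theorem hasTemperateGrowth_cexp_I_mul : (fun t : ℝ => cexp (I * t)).HasTemperateGrowth := by
  refine ⟨contDiff_exp.comp (contDiff_const.mul ofRealCLM.contDiff),
    fun m => ⟨0, 1, fun t => ?_⟩⟩
  rw [norm_iteratedFDeriv_eq_norm_iteratedDeriv, iteratedDeriv_cexp_I_mul]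
  simp [mul_comm I, norm_exp_ofReal_mul_I]

variable {n : ℕ}

theorem norm_chirp (w : Fin n → ℝ) (y : EuclideanSpace ℝ (Fin n)) : ‖chirp w y‖ = 1 := by
  rw [chirp, mul_comm, norm_exp_ofReal_mul_I]

theorem hasTemperateGrowth_chirp (w : Fin n → ℝ) : (chirp w).HasTemperateGrowth :=
  hasTemperateGrowth_cexp_I_mul.comp <| .sum fun k _ =>
    (Function.HasTemperateGrowth.const _).mul ((EuclideanSpace.proj k).hasTemperateGrowth.pow 2)

theorem tendsto_chirp_nhds_zero (y : EuclideanSpace ℝ (Fin n)) :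
    Tendsto (fun w : Fin n → ℝ => chirp w y) (𝓝 0) (𝓝 1) := by
  have : Continuous fun w : Fin n → ℝ => chirp w y := by unfold chirp; fun_prop
  simpa [chirp] using this.tendsto 0

theorem memLp_top_chirp (w : Fin n → ℝ) :
    MemLp (chirp w) ⊤ (volume : Measure (EuclideanSpace ℝ (Fin n))) :=
  memLp_top_of_bound (hasTemperateGrowth_chirp w).1.continuous.aestronglyMeasurable 1
    (.of_forall fun y => (norm_chirp w y).le)

end Chirp

section ChirpMulL

variable {n : ℕ} {p : ℝ≥0∞} [Fact (1 ≤ p)]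

variable (p) in
noncomputable def chirpMulL (w : Fin n → ℝ) :
    Lp ℂ p (volume : Measure (EuclideanSpace ℝ (Fin n))) →L[ℂ]
      Lp ℂ p (volume : Measure (EuclideanSpace ℝ (Fin n))) :=
  (ContinuousLinearMap.mul ℂ ℂ).holderL _ ⊤ p p ((memLp_top_chirp w).toLp (chirp w))

theorem coeFn_chirpMulL (w : Fin n → ℝ)
    (g : Lp ℂ p (volume : Measure (EuclideanSpace ℝ (Fin n)))) :
    chirpMulL p w g =ᵐ[volume] fun y => chirp w y * g y := by
  filter_upwards [(ContinuousLinearMap.mul ℂ ℂ).coeFn_holder (r := p)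
    ((memLp_top_chirp w).toLp (chirp w)) g, (memLp_top_chirp w).coeFn_toLp] with y hy hchirp
  simp [chirpMulL, hy, hchirp]

theorem norm_chirpMulL_apply (w : Fin n → ℝ)
    (g : Lp ℂ p (volume : Measure (EuclideanSpace ℝ (Fin n)))) :
    ‖chirpMulL p w g‖ = ‖g‖ := by
  rw [Lp.norm_def, Lp.norm_def, eLpNorm_congr_norm_ae (g := g)]
  filter_upwards [coeFn_chirpMulL w g] with y hy
  rw [hy, norm_mul, norm_chirp, one_mul]

theorem chirpMulL_toLp (w : Fin n → ℝ) (f : SchwartzMap (EuclideanSpace ℝ (Fin n)) ℂ) :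
    chirpMulL p w (f.toLp p) = (SchwartzMap.smulLeftCLM ℂ (chirp w) f).toLp p := by
  apply Lp.ext
  filter_upwards [coeFn_chirpMulL w (f.toLp p), f.coeFn_toLp p,
    (SchwartzMap.smulLeftCLM ℂ (chirp w) f).coeFn_toLp p] with y h1 h2 h3
  rw [h1, h2, h3, SchwartzMap.smulLeftCLM_apply_apply (hasTemperateGrowth_chirp w), smul_eq_mul]

theorem tendsto_chirpMulL (hp : p ≠ ⊤)
    (g : Lp ℂ p (volume : Measure (EuclideanSpace ℝ (Fin n)))) :
    Tendsto (fun w => chirpMulL p w g) (𝓝 0) (𝓝 g) := by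
  rw [Lp.tendsto_Lp_iff_tendsto_eLpNorm']
  have h := tendsto_eLpNorm_sub_of_dominated (μ := volume) (l := 𝓝 (0 : Fin n → ℝ))
    (F := fun w y => chirp w y * g y) (f := g) (G := fun y => 2 * ‖g y‖) hp
    (fun w => (hasTemperateGrowth_chirp w).1.continuous.aestronglyMeasurable.mul
      (Lp.aestronglyMeasurable g))
    (Lp.aestronglyMeasurable g) ((Lp.memLp g).norm.const_mul 2)
    (fun w => .of_forall fun y => by
      calc ‖chirp w y * g y - g y‖ ≤ ‖chirp w y * g y‖ + ‖g y‖ := norm_sub_le _ _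
        _ = 2 * ‖g y‖ := by rw [norm_mul, norm_chirp]; ring)
    (.of_forall fun y => by simpa using (tendsto_chirp_nhds_zero y).mul_const (g y))
  refine h.congr fun w => eLpNorm_congr_ae ?_
  filter_upwards [coeFn_chirpMulL w g] with y hy
  simp [hy]

theorem eq_chirpMulL_comp_riesz_comp_chirpMulL (hp : p ≠ ⊤) {a b d : Fin n → ℝ} {j : Fin n}
    {S T : Lp ℂ p (volume : Measure (EuclideanSpace ℝ (Fin n))) →L[ℂ]
      Lp ℂ p (volume : Measure (EuclideanSpace ℝ (Fin n)))}
    (hS : ∀ (f : SchwartzMap (EuclideanSpace ℝ (Fin n)) ℂ)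
      (hf : MemLp (⇑f) p (volume : Measure (EuclideanSpace ℝ (Fin n)))),
      (S (hf.toLp ⇑f) : EuclideanSpace ℝ (Fin n) → ℂ) =ᵐ[volume] lcRiesz a b d j ⇑f)
    (hT : ∀ (f : SchwartzMap (EuclideanSpace ℝ (Fin n)) ℂ)
      (hf : MemLp (⇑f) p (volume : Measure (EuclideanSpace ℝ (Fin n)))),
      (T (hf.toLp ⇑f) : EuclideanSpace ℝ (Fin n) → ℂ) =ᵐ[volume] rieszTrans j ⇑f) :
    S = chirpMulL p (fun k => -d k / (2 * b k)) ∘L T ∘L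
      chirpMulL p (fun k => a k / (2 * b k)) := by
  refine DFunLike.coe_injective <| (SchwartzMap.denseRange_toLpCLM (F := ℂ) hp).equalizer
    S.continuous (ContinuousLinearMap.continuous _) (funext fun f => ?_)
  set wa : Fin n → ℝ := fun k => a k / (2 * b k)
  set fa := SchwartzMap.smulLeftCLM ℂ (chirp wa) f
  have hfa : (fun y => f y * chirp wa y) = ⇑fa := by
    funext y
    rw [SchwartzMap.smulLeftCLM_apply_apply (hasTemperateGrowth_chirp wa), smul_eq_mul, mul_comm]
  apply Lp.ext
  simp only [Function.comp_apply, SchwartzMap.toLpCLM_apply, ContinuousLinearMap.coe_comp,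
    chirpMulL_toLp]
  filter_upwards [hS f (f.memLp p), hT fa (fa.memLp p),
    coeFn_chirpMulL (p := p) (fun k => -d k / (2 * b k)) (T (fa.toLp p))] with x hSx hTx hMx
  rw [SchwartzMap.toLp, hSx, hMx, SchwartzMap.toLp, hTx, lcRiesz, rieszTrans, hfa]
  ring

end ChirpMulL

theorem tendsto_div_two_mul_rho_mul_c (c : Fin 2 → ℝ) (hc : ∀ k, c k ≠ 0)
    {N : LCParam → Fin 2 → ℝ} (hN : Continuous N) (hN0 : N lcParamLimit = 0) :
    Tendsto (fun (q : LCParam) k => N q k / (2 * (q.1 k * c k))) (𝓝 lcParamLimit) (𝓝 0) := by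
  refine tendsto_pi_nhds.2 fun k => ?_
  have hden : 2 * (lcParamLimit.1 k * c k) ≠ 0 := by simp [lcParamLimit, hc k]
  have : ContinuousAt (fun q : LCParam => N q k / (2 * (q.1 k * c k))) lcParamLimit :=
    ((continuous_apply k).comp hN).continuousAt.div (by fun_prop) hden
  simpa [hN0] using this.tendsto

/-- In `ℝ²`, fix `j ∈ {1,2}`, `p ∈ (1,∞)`, and nonzero reals `c₁, c₂`;
for parameters `(ρ₁, ρ₂, a₁, a₂, d₁, d₂)` with `ρₖ cₖ ≠ 0` let `Aₖ = [[aₖ, ρₖ cₖ],[cₖ, dₖ]]`,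
and let `T_A` (resp. `T`) denote the continuous linear operator on `L^p(ℝ², ℂ)` agreeing
with `R_j^A` (resp. with the classical Riesz transform `R_j`) on Schwartz functions. Then
for every `g ∈ L^p(ℝ², ℂ)`, as `(ρ, a, d) → (-1, -1, 0, 0, 0, 0)`,
`‖T_A g − T g‖_{L^p(ℝ²)} → 0`. -/
theorem lcRiesz_operator_tendsto (c : Fin 2 → ℝ) (hc : ∀ k, c k ≠ 0) (j : Fin 2)
    (p : ℝ≥0∞) (hp1 : 1 < p) (hp2 : p ≠ ⊤) :
    letI : Fact (1 ≤ p) := ⟨hp1.le⟩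
    ∀ (TA : LCParam → (Lp ℂ p (volume : Measure (EuclideanSpace ℝ (Fin 2))) →L[ℂ]
        Lp ℂ p (volume : Measure (EuclideanSpace ℝ (Fin 2)))))
      (T : Lp ℂ p (volume : Measure (EuclideanSpace ℝ (Fin 2))) →L[ℂ]
        Lp ℂ p (volume : Measure (EuclideanSpace ℝ (Fin 2)))),
      (∀ q ∈ lcParamValid c, ∀ (f : SchwartzMap (EuclideanSpace ℝ (Fin 2)) ℂ)
        (hf : MemLp (⇑f) p (volume : Measure (EuclideanSpace ℝ (Fin 2)))),
        (TA q (hf.toLp ⇑f) : EuclideanSpace ℝ (Fin 2) → ℂ)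
          =ᵐ[volume] lcRiesz q.2.1 (fun k => q.1 k * c k) q.2.2 j (⇑f)) →
      (∀ (f : SchwartzMap (EuclideanSpace ℝ (Fin 2)) ℂ)
        (hf : MemLp (⇑f) p (volume : Measure (EuclideanSpace ℝ (Fin 2)))),
        (T (hf.toLp ⇑f) : EuclideanSpace ℝ (Fin 2) → ℂ)
          =ᵐ[volume] rieszTrans j (⇑f)) →
      ∀ g : Lp ℂ p (volume : Measure (EuclideanSpace ℝ (Fin 2))),
        Tendsto (fun q : LCParam => ‖TA q g - T g‖)
          (𝓝[lcParamValid c] lcParamLimit) (𝓝 0) := by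
  intro TA T hTA hT g
  have : Fact (1 ≤ p) := ⟨hp1.le⟩
  set wa := fun (q : LCParam) k => q.2.1 k / (2 * (q.1 k * c k))
  set wd := fun (q : LCParam) k => -q.2.2 k / (2 * (q.1 k * c k))
  have hwa : Tendsto wa (𝓝 lcParamLimit) (𝓝 0) :=
    tendsto_div_two_mul_rho_mul_c c hc (by fun_prop) (funext fun _ => by simp [lcParamLimit])
  have hwd : Tendsto wd (𝓝 lcParamLimit) (𝓝 0) :=
    tendsto_div_two_mul_rho_mul_c c hc (by fun_prop) (funext fun _ => by simp [lcParamLimit])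
  have ha := tendsto_iff_norm_sub_tendsto_zero.1 ((tendsto_chirpMulL hp2 g).comp hwa)
  have hd := tendsto_iff_norm_sub_tendsto_zero.1 ((tendsto_chirpMulL hp2 (T g)).comp hwd)
  refine squeeze_zero' (.of_forall fun _ => norm_nonneg _) ?_
    (by simpa using ((ha.const_mul ‖T‖).add hd).mono_left nhdsWithin_le_nhds)
  filter_upwards [self_mem_nhdsWithin] with q hq
  rw [eq_chirpMulL_comp_riesz_comp_chirpMulL hp2 (hTA q hq) hT]
  exact norm_comp_comp_apply_sub_le _ T _ (fun v => (norm_chirpMulL_apply _ v).le) g
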